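/- arXiv:1709.00534 — 12 statements merged into one kernel-verified Lean document; each statement's English description precedes it below -/
import Mathlib

section
/- For every B ∈ ℂ and every root r of the Ramanujan simple cubic p_B, one has r ≠ 1 and 1/(1 - r) is also a root of p_B. (Thus the order-three map n(x) = 1/(1-x) permutes the roots of p_B.) -/
/-- The Ramanujan simple cubic with parameter `B`, evaluated at `x`. -/
noncomputable def pB (B x : ℂ) : ℂ := x ^ 3 - ((3 + B) / 2) * x ^ 2 - ((3 - B) / 2) * x + 1

theorem stmt_0 (B r : ℂ) (hr : pB B r = 0) :
    r ≠ 1 ∧ pB B (1 / (1 - r)) = 0 := by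
  have h1 : r ≠ 1 := by
    rintro rfl
    rw [show pB B 1 = -1 by unfold pB; ring] at hr
    exact one_ne_zero (neg_eq_zero.mp hr)
  refine ⟨h1, ?_⟩
  have h : (1 : ℂ) - r ≠ 0 := sub_ne_zero.mpr (Ne.symm h1)
  have e1 : (1 / (1 - r)) * (1 - r) = 1 := div_mul_cancel₀ 1 h
  have key : pB B (1 / (1 - r)) * (1 - r) ^ 3 = - pB B r := by
    unfold pB
    linear_combination ((1 / (1 - r))^2 * (1 - r)^2 + (1 / (1 - r)) * (1 - r) + 1
      - ((3 + B) / 2) * ((1 / (1 - r)) * (1 - r) + 1) * (1 - r)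
      - ((3 - B) / 2) * (1 - r)^2) * e1
  have h0 : pB B (1 / (1 - r)) * (1 - r) ^ 3 = 0 := by rw [key, hr, neg_zero]
  exact (mul_eq_zero.mp h0).resolve_right (pow_ne_zero 3 h)
end

section
/- For every B ∈ ℂ and every x ∈ ℂ with x ≠ 1, one has -p_B(1/(1-x)) · (1-x)³ = p_B(x). -/
theorem stmt_1 (B x : ℂ) (hx : x ≠ 1) :
    -pB B (1 / (1 - x)) * (1 - x) ^ 3 = pB B x := by
  have h : (1 : ℂ) - x ≠ 0 := sub_ne_zero.mpr (Ne.symm hx)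
  have hx' : x = 1 - (1 - x) := by ring
  rw [pB, pB, hx']
  generalize hu : (1 : ℂ) - x = u at h ⊢
  rw [one_div]
  have h1 : u⁻¹ * u = 1 := inv_mul_cancel₀ h
  have e3 : u⁻¹ ^ 3 * u ^ 3 = 1 := by rw [← mul_pow, h1, one_pow]
  have e2 : u⁻¹ ^ 2 * u ^ 3 = u := by
    calc u⁻¹ ^ 2 * u ^ 3 = (u⁻¹ * u) ^ 2 * u := by ring
    _ = u := by rw [h1]; ring
  have e1 : u⁻¹ * u ^ 3 = u ^ 2 := by
    calc u⁻¹ * u ^ 3 = (u⁻¹ * u) * u ^ 2 := by ring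
    _ = u ^ 2 := by rw [h1]; ring
  linear_combination (-(1:ℂ)) * e3 + ((3 + B) / 2) * e2 + ((3 - B) / 2) * e1
end

section
/- Let f(x) = x³ + P·x² + Q·x + R with P, Q, R ∈ ℂ, let Δ = P²Q² - 4Q³ - 4P³R + 18PQR - 27R², and let s ∈ ℂ satisfy s² = Δ and s ≠ 0. Define a = (s - (9R - PQ))/(2s), c = (6Q - 2P²)/(2s), and B = 6a + 2cP - 3. If c ≠ 0, then for all x ∈ ℂ, f((a - x)/c) · (-c)³ = p_B(x), where p_B is the Ramanujan simple cubic with parameter B. -/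
theorem stmt_6 (P Q R Δ s a c B : ℂ)
    (hΔ : Δ = P ^ 2 * Q ^ 2 - 4 * Q ^ 3 - 4 * P ^ 3 * R + 18 * P * Q * R - 27 * R ^ 2)
    (hs : s ^ 2 = Δ) (hs0 : s ≠ 0)
    (ha : a = (s - (9 * R - P * Q)) / (2 * s))
    (hc : c = (6 * Q - 2 * P ^ 2) / (2 * s))
    (hB : B = 6 * a + 2 * c * P - 3)
    (hc0 : c ≠ 0) :
    ∀ x : ℂ,
      (((a - x) / c) ^ 3 + P * ((a - x) / c) ^ 2 + Q * ((a - x) / c) + R) * (-c) ^ 3 =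
        pB B x := by
  subst hΔ hB
  have hA : 2 * s * a = s - (9 * R - P * Q) := by
    rw [ha]; field_simp
  have hC : 2 * s * c = 6 * Q - 2 * P ^ 2 := by
    rw [hc]; field_simp
  have h4 : (4 : ℂ) * s ^ 2 ≠ 0 := by
    simp [hs0]
  have h8 : (8 : ℂ) * s ^ 3 ≠ 0 := by
    simp [hs0]
  have h1 : 3 * a ^ 2 + 2 * P * c * a + Q * c ^ 2 = 3 * a + c * P - 3 := by
    apply mul_left_cancel₀ h4
    linear_combination (3 * (2 * s * a + (s - (9 * R - P * Q))) + 2 * P * (6 * Q - 2 * P ^ 2) - 6 * s) * hA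
      + (2 * P * (2 * s * a) + Q * (2 * s * c + (6 * Q - 2 * P ^ 2)) - 2 * P * s) * hC
      + 9 * hs
  have h2 : a ^ 3 + P * c * a ^ 2 + Q * c ^ 2 * a + R * c ^ 3 = -1 := by
    apply mul_left_cancel₀ h8
    linear_combination
      (((2 * s * a) ^ 2 + (2 * s * a) * (s - (9 * R - P * Q)) + (s - (9 * R - P * Q)) ^ 2)
        + P * (6 * Q - 2 * P ^ 2) * (2 * s * a + (s - (9 * R - P * Q))) + Q * (2 * s * c) ^ 2) * hA
      + (P * (2 * s * a) ^ 2 + Q * (s - (9 * R - P * Q)) * (2 * s * c + (6 * Q - 2 * P ^ 2))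
        + R * ((2 * s * c) ^ 2 + (2 * s * c) * (6 * Q - 2 * P ^ 2) + (6 * Q - 2 * P ^ 2) ^ 2)) * hC
      + (9 * s + 3 * (P * Q - 9 * R) + 2 * P * (3 * Q - P ^ 2)) * hs
  intro x
  have key : (a - x) / c * c = a - x := div_mul_cancel₀ _ hc0
  simp only [pB]
  linear_combination
    (-(((a - x) / c * c) ^ 2 + ((a - x) / c * c) * (a - x) + (a - x) ^ 2)
      - P * c * (((a - x) / c * c) + (a - x)) - Q * c ^ 2) * key
    + x * h1 - h2
end

section
/- Let f(x) = x³ + P·x² + Q·x + R with P, Q, R ∈ ℂ, let Δ = P²Q² - 4Q³ - 4P³R + 18PQR - 27R², and let s ∈ ℂ satisfy s² = Δ and s ≠ 0. Define a = (s - (9R - PQ))/(2s), c = (6Q - 2P²)/(2s), and B = 6a + 2cP - 3, and assume c ≠ 0. Then for every z ∈ ℂ, z is a root of the Ramanujan simple cubic p_B if and only if z = a - c·t for some root t of f. -/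
theorem apply_eq_zero_iff_of_comp_affine {K : Type*} [Field K] {g f : K → K} {a c k : K}
    (hc : c ≠ 0) (hk : k ≠ 0) (h : ∀ t, g (a - c * t) = k * f t) (z : K) :
    g z = 0 ↔ ∃ t, f t = 0 ∧ z = a - c * t := by
  have hz : z = a - c * ((a - z) / c) := by field_simp; ring
  constructor
  · intro hgz
    refine ⟨(a - z) / c, ?_, hz⟩
    rw [← mul_eq_zero_iff_left hk, ← h, ← hz, hgz]
  · rintro ⟨t, hft, rfl⟩
    rw [h, hft, mul_zero]

/-- `h₁` and `h₀` are the vanishing of the `t` and constant coefficients of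
`pB B (a - c t) + c³ f(t)`; with `B` as given the `t²` coefficient vanishes identically. -/
theorem pB_sub_mul {a c P Q R B : ℂ} (hB : B = 6 * a + 2 * c * P - 3)
    (h₁ : 3 * a ^ 2 - 3 * a + 3 + c * P * (2 * a - 1) + c ^ 2 * Q = 0)
    (h₀ : (1 - a) ^ 3 - a ^ 3 + c * P * a * (1 - a) + c ^ 3 * R = 0) (t : ℂ) :
    pB B (a - c * t) = -c ^ 3 * (t ^ 3 + P * t ^ 2 + Q * t + R) := by
  subst hB
  unfold pB
  linear_combination c * t * h₁ + h₀

section DiscriminantSubstitution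

variable {P Q R s a c : ℂ}
  (hs : s ^ 2 = P ^ 2 * Q ^ 2 - 4 * Q ^ 3 - 4 * P ^ 3 * R + 18 * P * Q * R - 27 * R ^ 2)
  (hs0 : s ≠ 0) (ha : a = (s - (9 * R - P * Q)) / (2 * s))
  (hc : c = (6 * Q - 2 * P ^ 2) / (2 * s))
include hs hs0 ha hc

theorem coeff_one_relation_of_sq_eq_discr :
    3 * a ^ 2 - 3 * a + 3 + c * P * (2 * a - 1) + c ^ 2 * Q = 0 := by
  subst ha hc
  field_simp
  linear_combination 9 * hs

theorem coeff_zero_relation_of_sq_eq_discr :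
    (1 - a) ^ 3 - a ^ 3 + c * P * a * (1 - a) + c ^ 3 * R = 0 := by
  subst ha hc
  field_simp
  linear_combination (54 * R - 2 * P ^ 3) * hs

end DiscriminantSubstitution

theorem stmt_7 (P Q R Δ s a c B : ℂ)
    (hΔ : Δ = P ^ 2 * Q ^ 2 - 4 * Q ^ 3 - 4 * P ^ 3 * R + 18 * P * Q * R - 27 * R ^ 2)
    (hs : s ^ 2 = Δ) (hs0 : s ≠ 0)
    (ha : a = (s - (9 * R - P * Q)) / (2 * s))
    (hc : c = (6 * Q - 2 * P ^ 2) / (2 * s))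
    (hB : B = 6 * a + 2 * c * P - 3)
    (hc0 : c ≠ 0) :
    ∀ z : ℂ, pB B z = 0 ↔
      ∃ t : ℂ, t ^ 3 + P * t ^ 2 + Q * t + R = 0 ∧ z = a - c * t := by
  subst hΔ
  have hsub := pB_sub_mul hB (coeff_one_relation_of_sq_eq_discr hs hs0 ha hc)
    (coeff_zero_relation_of_sq_eq_discr hs hs0 ha hc)
  exact apply_eq_zero_iff_of_comp_affine hc0 (neg_ne_zero.2 (pow_ne_zero 3 hc0)) hsub
end

section
/- Let P, Q, R ∈ ℂ, let Δ = P²Q² - 4Q³ - 4P³R + 18PQR - 27R², and let s ∈ ℂ satisfy s² = Δ and s ≠ 0. Define a = (s - (9R - PQ))/(2s), b = (2Q² - 6PR)/(2s), c = (6Q - 2P²)/(2s), and d = 1 - a. Then ad - bc = 1. -/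
theorem stmt_8 (P Q R Δ s a b c d : ℂ)
    (hΔ : Δ = P ^ 2 * Q ^ 2 - 4 * Q ^ 3 - 4 * P ^ 3 * R + 18 * P * Q * R - 27 * R ^ 2)
    (hs : s ^ 2 = Δ) (hs0 : s ≠ 0)
    (ha : a = (s - (9 * R - P * Q)) / (2 * s))
    (hb : b = (2 * Q ^ 2 - 6 * P * R) / (2 * s))
    (hc : c = (6 * Q - 2 * P ^ 2) / (2 * s))
    (hd : d = 1 - a) :
    a * d - b * c = 1 := by
  subst hΔ hd ha hb hc
  field_simp
  linear_combination (-3:ℂ) * hs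
end

section
/- (1/9)^(1/3) - (2/9)^(1/3) + (4/9)^(1/3) = (2^(1/3) - 1)^(1/3), where all powers are real powers of positive real numbers. -/
theorem stmt_11 :
    ((1 / 9 : ℝ)) ^ ((1 : ℝ) / 3) - ((2 / 9 : ℝ)) ^ ((1 : ℝ) / 3) +
      ((4 / 9 : ℝ)) ^ ((1 : ℝ) / 3) =
      ((2 : ℝ) ^ ((1 : ℝ) / 3) - 1) ^ ((1 : ℝ) / 3) := by
  have h3 : ∀ x : ℝ, 0 ≤ x → (x ^ ((1:ℝ)/3)) ^ (3:ℕ) = x := by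
    intro x hx
    rw [← Real.rpow_natCast (x ^ ((1:ℝ)/3)) 3, ← Real.rpow_mul hx]
    norm_num
  set a := (2:ℝ) ^ ((1:ℝ)/3) with ha
  set c := (9:ℝ) ^ ((1:ℝ)/3) with hc
  have ha0 : 0 ≤ a := Real.rpow_nonneg (by norm_num) _
  have ha3 : a ^ (3:ℕ) = 2 := h3 2 (by norm_num)
  have hc0 : 0 < c := Real.rpow_pos_of_pos (by norm_num) _
  have hc3 : c ^ (3:ℕ) = 9 := h3 9 (by norm_num)
  have ha1 : 1 ≤ a := by nlinarith [ha3, ha0, sq_nonneg (a - 1), sq_nonneg (a + 1), sq_nonneg a]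
  have h19 : ((1/9:ℝ)) ^ ((1:ℝ)/3) = 1 / c := by
    rw [Real.div_rpow (by norm_num) (by norm_num), Real.one_rpow]
  have h29 : ((2/9:ℝ)) ^ ((1:ℝ)/3) = a / c := by
    rw [Real.div_rpow (by norm_num) (by norm_num)]
  have h49 : ((4/9:ℝ)) ^ ((1:ℝ)/3) = a^2 / c := by
    rw [Real.div_rpow (by norm_num) (by norm_num)]
    congr 1
    rw [show (4:ℝ) = 2 ^ (2:ℕ) by norm_num, ← Real.rpow_natCast (2:ℝ) 2,
      ← Real.rpow_mul (by norm_num), ha, ← Real.rpow_natCast (2 ^ ((1:ℝ)/3)) 2,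
      ← Real.rpow_mul (by norm_num)]
    norm_num
  rw [h19, h29, h49]
  set L := 1/c - a/c + a^2/c with hL
  set R := (a - 1) ^ ((1:ℝ)/3) with hR
  have hL0 : 0 ≤ L := by
    have h1 : 0 ≤ 1 - a + a^2 := by nlinarith [sq_nonneg (a - 1)]
    have h2 : L = (1 - a + a^2) / c := by rw [hL]; ring
    rw [h2]
    exact div_nonneg h1 hc0.le
  have hR0 : 0 ≤ R := Real.rpow_nonneg (by linarith) _
  have hR3 : R ^ (3:ℕ) = a - 1 := h3 _ (by linarith)
  have hL3 : L ^ (3:ℕ) = a - 1 := by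
    rw [hL]
    field_simp
    nlinarith [ha3, hc3, hc0]
  have h33 : (3:ℕ) ≠ 0 := by norm_num
  have := (pow_left_strictMonoOn₀ h33).injOn (Set.mem_Ici.mpr hL0)
    (Set.mem_Ici.mpr hR0) (by rw [hL3, hR3])
  exact this
end

section
/- (cos(2π/9))^(1/3) + (cos(4π/9))^(1/3) - (cos(π/9))^(1/3) = ( (3/2)·(9^(1/3) - 2) )^(1/3), where all powers are real powers of positive real numbers. -/
/-!
By the triple-angle formula, `cos (2π/9)`, `cos (4π/9)` and `cos (8π/9) = -cos (π/9)` are the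
three roots of `x³ - (3/4) x + 1/8`, so their sum, pairwise products and product are `0`, `-3/4`
and `-1/8`. For their real cube roots `u, v, w` put `p = u + v + w` and `q = uv + vw + wu`.
Expanding `p³` and `q³` with `uvw = -1/2` gives `p³ = 3pq + 3/2` and `q³ = -(3/2)(pq + 1)`;
multiplying them shows `(pq + 3/2)³ = 9/8`, hence `(p³ + 3)³ = 243/8`, i.e.
`p³ = (3/2)(∛9 - 2)`.
-/

open Real

theorem depressed_cubic_vieta {K : Type*} [CommRing K] [IsDomain K] {b c x y z : K}
    (hx : x ^ 3 + b * x + c = 0) (hy : y ^ 3 + b * y + c = 0) (hz : z ^ 3 + b * z + c = 0)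
    (hxy : x ≠ y) (hyz : y ≠ z) (hxz : x ≠ z) :
    x + y + z = 0 ∧ x * y + y * z + z * x = b ∧ x * y * z = -c := by
  have hxy' : x ^ 2 + x * y + y ^ 2 + b = 0 := by
    apply mul_left_cancel₀ (sub_ne_zero.mpr hxy)
    linear_combination hx - hy
  have hyz' : y ^ 2 + y * z + z ^ 2 + b = 0 := by
    apply mul_left_cancel₀ (sub_ne_zero.mpr hyz)
    linear_combination hy - hz
  have hsum : x + y + z = 0 := by
    apply mul_left_cancel₀ (sub_ne_zero.mpr hxz)
    linear_combination hxy' - hyz'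
  have hpairs : x * y + y * z + z * x = b := by linear_combination (x + y) * hsum - hxy'
  exact ⟨hsum, hpairs, by linear_combination hx + x * hpairs - x ^ 2 * hsum⟩

theorem cos_cubic_of_cos_three_mul_eq_neg_half {θ : ℝ} (h : cos (3 * θ) = -1 / 2) :
    cos θ ^ 3 + (-3 / 4) * cos θ + 1 / 8 = 0 := by
  linear_combination (h - cos_three_mul θ) / 4

theorem cos_two_pi_div_nine_cubic_roots :
    cos (2 * π / 9) ^ 3 + (-3 / 4) * cos (2 * π / 9) + 1 / 8 = 0 ∧
      cos (4 * π / 9) ^ 3 + (-3 / 4) * cos (4 * π / 9) + 1 / 8 = 0 ∧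
      cos (8 * π / 9) ^ 3 + (-3 / 4) * cos (8 * π / 9) + 1 / 8 = 0 := by
  refine ⟨cos_cubic_of_cos_three_mul_eq_neg_half ?_, cos_cubic_of_cos_three_mul_eq_neg_half ?_,
    cos_cubic_of_cos_three_mul_eq_neg_half ?_⟩
  · rw [show 3 * (2 * π / 9) = π - π / 3 by ring, cos_pi_sub, cos_pi_div_three]; norm_num
  · rw [show 3 * (4 * π / 9) = π / 3 + π by ring, cos_add_pi, cos_pi_div_three]; norm_num
  · rw [show 3 * (8 * π / 9) = π - π / 3 + 2 * π by ring, cos_add_two_pi, cos_pi_sub,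
      cos_pi_div_three]; norm_num

theorem rpow_one_third_pow_three {x : ℝ} (hx : 0 ≤ x) : (x ^ ((1 : ℝ) / 3)) ^ 3 = x := by
  simpa [one_div] using rpow_inv_natCast_pow hx three_ne_zero

theorem rpow_one_third_eq_of_pow_three {x y : ℝ} (hx : 0 ≤ x) (h : x ^ 3 = y) :
    y ^ ((1 : ℝ) / 3) = x := by
  simpa [one_div, h] using pow_rpow_inv_natCast hx three_ne_zero

theorem sum_cube_eq {u v w : ℝ} (hcubes : u ^ 3 + v ^ 3 + w ^ 3 = 0) (hprod : u * v * w = -1 / 2) :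
    (u + v + w) ^ 3 = 3 * ((u + v + w) * (u * v + v * w + w * u)) + 3 / 2 := by
  linear_combination hcubes - 3 * hprod

theorem sum_pair_products_cube_eq {u v w : ℝ}
    (hpairs : u ^ 3 * v ^ 3 + v ^ 3 * w ^ 3 + w ^ 3 * u ^ 3 = -3 / 4) (hprod : u * v * w = -1 / 2) :
    (u * v + v * w + w * u) ^ 3 = -3 / 2 * ((u + v + w) * (u * v + v * w + w * u)) - 3 / 2 := by
  linear_combination hpairs + (3 * (u + v + w) * (u * v + v * w + w * u) - 3 * (u * v * w) + 3 / 2) * hprod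

theorem cube_add_three_cube_eq {p q : ℝ} (hp : p ^ 3 = 3 * (p * q) + 3 / 2)
    (hq : q ^ 3 = -3 / 2 * (p * q) - 3 / 2) : (p ^ 3 + 3) ^ 3 = 243 / 8 := by
  have hpq : (p * q + 3 / 2) ^ 3 = 9 / 8 := by
    linear_combination q ^ 3 * hp + (3 * (p * q) + 3 / 2) * hq
  linear_combination 27 * hpq +
    ((p ^ 3 + 3) ^ 2 + (p ^ 3 + 3) * (3 * (p * q) + 9 / 2) + (3 * (p * q) + 9 / 2) ^ 2) * hp

theorem sum_cube_roots_cube_add_three_cube_eq {α β γ u v w : ℝ}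
    (hα : α ^ 3 + (-3 / 4) * α + 1 / 8 = 0) (hβ : β ^ 3 + (-3 / 4) * β + 1 / 8 = 0)
    (hγ : γ ^ 3 + (-3 / 4) * γ + 1 / 8 = 0) (hαβ : α ≠ β) (hβγ : β ≠ γ) (hαγ : α ≠ γ)
    (hu : u ^ 3 = α) (hv : v ^ 3 = β) (hw : w ^ 3 = γ) :
    ((u + v + w) ^ 3 + 3) ^ 3 = 243 / 8 := by
  obtain ⟨e1, e2, e3⟩ := depressed_cubic_vieta hα hβ hγ hαβ hβγ hαγ
  have huvw : u * v * w = -1 / 2 := by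
    apply Odd.pow_injective (n := 3) ⟨1, rfl⟩
    linear_combination hu * v ^ 3 * w ^ 3 + α * hv * w ^ 3 + α * β * hw + e3
  refine cube_add_three_cube_eq (sum_cube_eq ?_ huvw) (sum_pair_products_cube_eq ?_ huvw)
  · rw [hu, hv, hw, e1]
  · rw [hu, hv, hw, e2]

theorem rpow_one_third_eq_of_cube_add_three_cube_eq {p : ℝ} (h : (p ^ 3 + 3) ^ 3 = 243 / 8) :
    ((3 / 2 : ℝ) * ((9 : ℝ) ^ ((1 : ℝ) / 3) - 2)) ^ ((1 : ℝ) / 3) = p := by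
  have ht : ((9 : ℝ) ^ ((1 : ℝ) / 3)) ^ 3 = 9 := rpow_one_third_pow_three (by norm_num)
  have hp : p ^ 3 + 3 = 3 / 2 * (9 : ℝ) ^ ((1 : ℝ) / 3) :=
    Odd.pow_injective (n := 3) ⟨1, rfl⟩ (by linear_combination h - 27 / 8 * ht)
  have ht2 : 2 ≤ (9 : ℝ) ^ ((1 : ℝ) / 3) :=
    le_of_pow_le_pow_left₀ three_ne_zero (by positivity) (by norm_num [ht])
  have hp0 : 0 ≤ p := (Odd.pow_nonneg_iff (n := 3) ⟨1, rfl⟩).mp (by linarith)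
  exact rpow_one_third_eq_of_pow_three hp0 (by linarith)

theorem stmt_12 :
    (Real.cos (2 * Real.pi / 9)) ^ ((1 : ℝ) / 3) +
      (Real.cos (4 * Real.pi / 9)) ^ ((1 : ℝ) / 3) -
      (Real.cos (Real.pi / 9)) ^ ((1 : ℝ) / 3) =
      ((3 / 2 : ℝ) * ((9 : ℝ) ^ ((1 : ℝ) / 3) - 2)) ^ ((1 : ℝ) / 3) := by
  have hπ := pi_pos
  obtain ⟨h₁, h₂, h₄⟩ := cos_two_pi_div_nine_cubic_roots
  have h₁₂ : cos (2 * π / 9) ≠ cos (4 * π / 9) :=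
    (cos_lt_cos_of_nonneg_of_le_pi (by positivity) (by linarith) (by linarith)).ne'
  have h₂₄ : cos (4 * π / 9) ≠ cos (8 * π / 9) :=
    (cos_lt_cos_of_nonneg_of_le_pi (by positivity) (by linarith) (by linarith)).ne'
  have h₁₄ : cos (2 * π / 9) ≠ cos (8 * π / 9) :=
    (cos_lt_cos_of_nonneg_of_le_pi (by positivity) (by linarith) (by linarith)).ne'
  have h₈ : cos (8 * π / 9) = -cos (π / 9) := by
    rw [show 8 * π / 9 = π - π / 9 by ring, cos_pi_sub]
  have hcube := sum_cube_roots_cube_add_three_cube_eq h₁ h₂ h₄ h₁₂ h₂₄ h₁₄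
    (rpow_one_third_pow_three (cos_nonneg_of_mem_Icc ⟨by linarith, by linarith⟩))
    (rpow_one_third_pow_three (cos_nonneg_of_mem_Icc ⟨by linarith, by linarith⟩))
    (w := -cos (π / 9) ^ ((1 : ℝ) / 3)) (by
      rw [neg_pow, rpow_one_third_pow_three (cos_nonneg_of_mem_Icc ⟨by linarith, by linarith⟩),
        h₈]; ring)
  rw [rpow_one_third_eq_of_cube_add_three_cube_eq hcube]
  ring
end

section
/- For all real x, x³ - 3x + 1 = (x - 2·cos(2π/9))·(x - 2·cos(4π/9))·(x + 2·cos(π/9)); that is, the roots of x³ - 3x + 1 are 2cos(2π/9), 2cos(4π/9), and -2cos(π/9). -/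
theorem stmt_13 :
    ∀ x : ℝ, x ^ 3 - 3 * x + 1 =
      (x - 2 * Real.cos (2 * Real.pi / 9)) * (x - 2 * Real.cos (4 * Real.pi / 9)) *
        (x + 2 * Real.cos (Real.pi / 9)) := by
  intro x
  set a := Real.cos (2 * Real.pi / 9) with ha_def
  set b := Real.cos (4 * Real.pi / 9) with hb_def
  set c := -Real.cos (Real.pi / 9) with hc_def
  have hpi := Real.pi_pos
  -- cubic equations from triple angle formula
  have ha : 8 * a ^ 3 - 6 * a + 1 = 0 := by
    have h3 : Real.cos (3 * (2 * Real.pi / 9)) = 4 * a ^ 3 - 3 * a :=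
      Real.cos_three_mul _
    have : (3 : ℝ) * (2 * Real.pi / 9) = Real.pi - Real.pi / 3 := by ring
    rw [this, Real.cos_pi_sub, Real.cos_pi_div_three] at h3
    linarith
  have hb : 8 * b ^ 3 - 6 * b + 1 = 0 := by
    have h3 : Real.cos (3 * (4 * Real.pi / 9)) = 4 * b ^ 3 - 3 * b :=
      Real.cos_three_mul _
    have : (3 : ℝ) * (4 * Real.pi / 9) = Real.pi - -(Real.pi / 3) := by ring
    rw [this, Real.cos_pi_sub, Real.cos_neg, Real.cos_pi_div_three] at h3
    linarith
  have hc : 8 * c ^ 3 - 6 * c + 1 = 0 := by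
    have h3 : Real.cos (3 * (Real.pi / 9)) = 4 * (Real.cos (Real.pi / 9)) ^ 3
        - 3 * Real.cos (Real.pi / 9) := Real.cos_three_mul _
    have : (3 : ℝ) * (Real.pi / 9) = Real.pi / 3 := by ring
    rw [this, Real.cos_pi_div_three] at h3
    rw [hc_def]; nlinarith [h3]
  -- bounds giving distinctness: a > 1/2 > b > 0 > c
  have hcos_half : Real.cos (Real.pi / 3) = 1 / 2 := Real.cos_pi_div_three
  have hab : b < a := by
    rw [ha_def, hb_def]
    apply Real.cos_lt_cos_of_nonneg_of_le_pi (by positivity) (by linarith) (by linarith)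
  have ha_gt : 1 / 2 < a := by
    rw [ha_def, ← hcos_half]
    apply Real.cos_lt_cos_of_nonneg_of_le_pi (by positivity) (by linarith) (by linarith)
  have hb_pos : 0 < b := by
    rw [hb_def]
    apply Real.cos_pos_of_mem_Ioo
    constructor <;> [linarith; linarith]
  have hc_neg : c < 0 := by
    rw [hc_def, neg_lt, neg_zero]
    apply Real.cos_pos_of_mem_Ioo
    constructor <;> [linarith; linarith]
  have hab_ne : a - b ≠ 0 := by linarith
  have hbc_ne : b - c ≠ 0 := by linarith
  have hac_ne : a - c ≠ 0 := by linarith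
  -- symmetric functions
  have hq1 : a ^ 2 + a * b + b ^ 2 = 3 / 4 := by
    have h : (a - b) * (8 * (a ^ 2 + a * b + b ^ 2) - 6) = 0 := by
      linear_combination ha - hb
    rcases mul_eq_zero.mp h with h | h
    · exact absurd h hab_ne
    · linear_combination h / 8
  have hq2 : a ^ 2 + a * c + c ^ 2 = 3 / 4 := by
    have h : (a - c) * (8 * (a ^ 2 + a * c + c ^ 2) - 6) = 0 := by
      linear_combination ha - hc
    rcases mul_eq_zero.mp h with h | h
    · exact absurd h hac_ne
    · linear_combination h / 8
  have he1 : a + b + c = 0 := by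
    have h : (b - c) * (a + b + c) = 0 := by linear_combination hq1 - hq2
    rcases mul_eq_zero.mp h with h | h
    · exact absurd h hbc_ne
    · exact h
  have he2 : a * b + b * c + a * c = -(3 / 4) := by
    linear_combination (a + b) * he1 - hq1
  have he3 : a * b * c = -(1 / 8) := by
    linear_combination (1/24) * ha + (1/24) * hb + (1/24) * hc
      + (1/4 - (a^2 + b^2 + c^2 - a*b - b*c - a*c)/3) * he1
  have hcc : 2 * Real.cos (Real.pi / 9) = -(2 * c) := by rw [hc_def]; ring
  rw [hcc]
  linear_combination 2 * x ^ 2 * he1 - 4 * x * he2 + 8 * he3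
end

section
/- (2√3 - 2)^(1/3) - (√3 - 1)^(1/3) + (2√3 + 4)^(1/3) = √3 · ( 1 + √3·(4^(1/3) - 1) )^(1/3), where all powers are real powers of positive real numbers. -/
private lemma cr (x : ℝ) (hx : 0 ≤ x) : (x ^ ((1:ℝ)/3)) ^ 3 = x := by
  rw [← Real.rpow_natCast (x ^ ((1:ℝ)/3)) 3, ← Real.rpow_mul hx]
  norm_num

private lemma cube_inj {x y : ℝ} (h : x ^ 3 = y ^ 3) : x = y :=
  (Odd.strictMono_pow (R := ℝ) ⟨1, by norm_num⟩).injective h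

theorem stmt_14 :
    (2 * Real.sqrt 3 - 2) ^ ((1 : ℝ) / 3) - (Real.sqrt 3 - 1) ^ ((1 : ℝ) / 3) +
      (2 * Real.sqrt 3 + 4) ^ ((1 : ℝ) / 3) =
      Real.sqrt 3 * (1 + Real.sqrt 3 * ((4 : ℝ) ^ ((1 : ℝ) / 3) - 1)) ^ ((1 : ℝ) / 3) := by
  have hsq : Real.sqrt 3 ^ 2 = 3 := Real.sq_sqrt (by norm_num)
  have hsnn : (0:ℝ) ≤ Real.sqrt 3 := Real.sqrt_nonneg 3
  have h1 : (1:ℝ) ≤ Real.sqrt 3 := by nlinarith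
  set r := Real.sqrt 3 with hr
  set a := (2 * r - 2) ^ ((1:ℝ)/3) with hadef
  set b := (r - 1) ^ ((1:ℝ)/3) with hbdef
  set d := (2 * r + 4) ^ ((1:ℝ)/3) with hddef
  set t := (4:ℝ) ^ ((1:ℝ)/3) with htdef
  have ha3 : a ^ 3 = 2 * r - 2 := cr _ (by linarith)
  have hb3 : b ^ 3 = r - 1 := cr _ (by linarith)
  have hd3 : d ^ 3 = 2 * r + 4 := cr _ (by linarith)
  have ht3 : t ^ 3 = 4 := cr _ (by norm_num)
  have hann : 0 ≤ a := Real.rpow_nonneg (by linarith) _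
  have hbnn : 0 ≤ b := Real.rpow_nonneg (by linarith) _
  have hdnn : 0 ≤ d := Real.rpow_nonneg (by linarith) _
  have htnn : 0 ≤ t := Real.rpow_nonneg (by norm_num) _
  -- product of the three cube roots
  have hQ : a * b * d = 2 := by
    apply cube_inj
    have : (a * b * d) ^ 3 = a ^ 3 * b ^ 3 * d ^ 3 := by ring
    rw [this, ha3, hb3, hd3]
    nlinarith [hsq]
  set S := a - b + d with hS
  set P := a * d - a * b - b * d with hP
  have hs3 : S ^ 3 = 3 * r + 9 + 3 * (S * P) := by
    rw [hS, hP]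
    linear_combination ha3 - hb3 + hd3 + 3 * hQ
  have hp3 : P ^ 3 = 6 * r - 18 - 6 * (S * P) := by
    rw [hS, hP]
    linear_combination (d^3) * ha3 + (2*r-2) * hd3 - (b^3) * ha3 - (2*r-2) * hb3
      - (d^3) * hb3 - (r-1) * hd3
      + (-3*((a-b+d)*(a*d-a*b-b*d)) - 3*(a*b*d) - 6) * hQ
  have hM : (S * P + 6) ^ 3 = 108 := by
    linear_combination P^3 * hs3 + (3*r + 9 + 3*(S*P)) * hp3 + 18 * hsq
  have hMt : S * P + 6 = 3 * t := by
    apply cube_inj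
    rw [hM]; linear_combination (-27) * ht3
  have hS3 : S ^ 3 = 3 * r - 9 + 9 * t := by
    linear_combination hs3 + 3 * hMt
  have ht1 : (1:ℝ) ≤ t := by nlinarith [ht3, htnn, sq_nonneg (t - 1), sq_nonneg (t + 1)]
  have hXnn : (0:ℝ) ≤ 1 + r * (t - 1) := by
    have := mul_nonneg hsnn (by linarith : (0:ℝ) ≤ t - 1); linarith
  have hx := cr (1 + r * (t - 1)) hXnn
  have hR3 : (r * (1 + r * (t - 1)) ^ ((1:ℝ)/3)) ^ 3 = 3 * r - 9 + 9 * t := by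
    have h : (r * (1 + r * (t - 1)) ^ ((1:ℝ)/3)) ^ 3
        = r ^ 3 * (1 + r * (t - 1)) := by
      rw [mul_pow, hx]
    rw [h]
    linear_combination (r + (t - 1) * (r^2 + 3)) * hsq
  exact cube_inj (hS3.trans hR3.symm)
end

section
/- 2√6 · cos(11π/36) + 6 · cos(10π/36) = (3√2 + √6) · cos(π/36). -/
theorem stmt_15 :
    2 * Real.sqrt 6 * Real.cos (11 * Real.pi / 36) + 6 * Real.cos (10 * Real.pi / 36) =
      (3 * Real.sqrt 2 + Real.sqrt 6) * Real.cos (Real.pi / 36) := by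
  have key : Real.sqrt 6 * Real.sqrt 3 = 3 * Real.sqrt 2 := by
    rw [← Real.sqrt_mul (by norm_num), show (6 * 3 : ℝ) = 3 ^ 2 * 2 by norm_num,
      Real.sqrt_mul (by positivity), Real.sqrt_sq (by norm_num)]
  have e1 : (11 * Real.pi / 36) = Real.pi / 3 - Real.pi / 36 := by ring
  have e2 : (10 * Real.pi / 36) = Real.pi / 4 + Real.pi / 36 := by ring
  rw [e1, e2, Real.cos_sub, Real.cos_add, Real.cos_pi_div_three, Real.sin_pi_div_three,
    Real.cos_pi_div_four, Real.sin_pi_div_four]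
  linear_combination Real.sin (Real.pi / 36) * key
end

section
/- cos(5π/18) = 2·cos(π/18) - √3·cos(4π/18). -/
theorem stmt_18 :
    Real.cos (5 * Real.pi / 18) =
      2 * Real.cos (Real.pi / 18) - Real.sqrt 3 * Real.cos (4 * Real.pi / 18) := by
  set t := Real.pi / 18 with ht
  have h6 : Real.cos (6 * t) = 1 / 2 := by
    rw [show 6 * t = Real.pi / 3 by rw [ht]; ring]
    exact Real.cos_pi_div_three
  have h3 : Real.cos (3 * t) = Real.sqrt 3 / 2 := by
    rw [show 3 * t = Real.pi / 6 by rw [ht]; ring]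
    exact Real.cos_pi_div_six
  have A : Real.cos (7 * t) + Real.cos (5 * t) = 2 * Real.cos (6 * t) * Real.cos t := by
    rw [show 7 * t = 6 * t + t by ring, show 5 * t = 6 * t - t by ring,
      Real.cos_add, Real.cos_sub]; ring
  have B : Real.cos (7 * t) + Real.cos t = 2 * Real.cos (3 * t) * Real.cos (4 * t) := by
    rw [show 7 * t = 3 * t + 4 * t by ring, show t = 4 * t - 3 * t by ring,
      Real.cos_add, Real.cos_sub]; ring
  rw [h6] at A
  rw [h3] at B
  rw [show 5 * Real.pi / 18 = 5 * t by rw [ht]; ring,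
    show 4 * Real.pi / 18 = 4 * t by rw [ht]; ring]
  nlinarith [A, B]
end

section
/- -5 + √13 + 2·√(26 - 6√13)·cos(π/26) = 4·cos(4π/13) + 4·cos(6π/13). -/
open Real

private lemma mulcos (a b : ℝ) :
    Real.cos a * Real.cos b = (Real.cos (a + b) + Real.cos (a - b)) / 2 := by
  rw [Real.cos_add, Real.cos_sub]; ring

private lemma mulsin (a b : ℝ) :
    Real.sin a * Real.sin b = (Real.cos (a - b) - Real.cos (a + b)) / 2 := by
  rw [Real.cos_add, Real.cos_sub]; ring

private lemma sincos (a b : ℝ) :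
    Real.sin a * Real.cos b = (Real.sin (a + b) + Real.sin (a - b)) / 2 := by
  rw [Real.sin_add, Real.sin_sub]; ring

private lemma hS :
    Real.cos (2 * Real.pi / 13) + Real.cos (4 * Real.pi / 13) + Real.cos (6 * Real.pi / 13) +
      Real.cos (8 * Real.pi / 13) + Real.cos (10 * Real.pi / 13) + Real.cos (12 * Real.pi / 13)
      = -1 / 2 := by
  have key : ∀ k : ℝ, 2 * Real.cos (k * Real.pi / 13) * Real.sin (Real.pi / 13)
      = Real.sin ((k + 1) * Real.pi / 13) - Real.sin ((k - 1) * Real.pi / 13) := by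
    intro k
    rw [show (k + 1) * Real.pi / 13 = k * Real.pi / 13 + Real.pi / 13 by ring,
      show (k - 1) * Real.pi / 13 = k * Real.pi / 13 - Real.pi / 13 by ring,
      Real.sin_add, Real.sin_sub]
    ring
  have hpi := Real.pi_pos
  have hsin : 0 < Real.sin (Real.pi / 13) :=
    Real.sin_pos_of_pos_of_lt_pi (by positivity) (by nlinarith)
  have h13 : Real.sin (13 * Real.pi / 13) = 0 := by
    rw [show 13 * Real.pi / 13 = Real.pi by ring, Real.sin_pi]
  have h1 : Real.sin (1 * Real.pi / 13) = Real.sin (Real.pi / 13) := by norm_num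
  have hsum : 2 * Real.sin (Real.pi / 13) *
      (Real.cos (2 * Real.pi / 13) + Real.cos (4 * Real.pi / 13) + Real.cos (6 * Real.pi / 13) +
        Real.cos (8 * Real.pi / 13) + Real.cos (10 * Real.pi / 13) + Real.cos (12 * Real.pi / 13)
        + 1 / 2) = 0 := by
    have k2 := key 2; have k4 := key 4; have k6 := key 6
    have k8 := key 8; have k10 := key 10; have k12 := key 12
    norm_num at k2 k4 k6 k8 k10 k12
    linear_combination (norm := ring_nf) k2 + k4 + k6 + k8 + k10 + k12
  rcases mul_eq_zero.mp hsum with h | h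
  · nlinarith
  · linarith

private lemma reduce (k : ℝ) :
    Real.cos ((13 - k) * Real.pi / 13) = -Real.cos (k * Real.pi / 13) := by
  rw [show (13 - k) * Real.pi / 13 = Real.pi - k * Real.pi / 13 by ring, Real.cos_pi_sub]

set_option maxHeartbeats 1000000 in
theorem stmt_19 :
    -5 + Real.sqrt 13 +
      2 * Real.sqrt (26 - 6 * Real.sqrt 13) * Real.cos (Real.pi / 26) =
      4 * Real.cos (4 * Real.pi / 13) + 4 * Real.cos (6 * Real.pi / 13) := by
  have hpi := Real.pi_pos
  have hSS := hS
  -- reductions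
  have r7 : Real.cos (7 * Real.pi / 13) = -Real.cos (6 * Real.pi / 13) := by
    rw [show (7:ℝ) * Real.pi / 13 = (13 - 6) * Real.pi / 13 by norm_num]; exact reduce 6
  have r8 : Real.cos (8 * Real.pi / 13) = -Real.cos (5 * Real.pi / 13) := by
    rw [show (8:ℝ) * Real.pi / 13 = (13 - 5) * Real.pi / 13 by norm_num]; exact reduce 5
  have r10 : Real.cos (10 * Real.pi / 13) = -Real.cos (3 * Real.pi / 13) := by
    rw [show (10:ℝ) * Real.pi / 13 = (13 - 3) * Real.pi / 13 by norm_num]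
    exact reduce 3
  have r11 : Real.cos (11 * Real.pi / 13) = -Real.cos (2 * Real.pi / 13) := by
    rw [show (11:ℝ) * Real.pi / 13 = (13 - 2) * Real.pi / 13 by norm_num]; exact reduce 2
  have r12 : Real.cos (12 * Real.pi / 13) = -Real.cos (1 * Real.pi / 13) := by
    rw [show (12:ℝ) * Real.pi / 13 = (13 - 1) * Real.pi / 13 by norm_num]
    exact reduce 1
  have r14 : Real.cos (14 * Real.pi / 13) = Real.cos (12 * Real.pi / 13) := by
    rw [show (14:ℝ) * Real.pi / 13 = Real.pi - (-(Real.pi / 13)) by ring,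
      Real.cos_pi_sub, show (12:ℝ) * Real.pi / 13 = Real.pi - Real.pi / 13 by ring,
      Real.cos_pi_sub, Real.cos_neg]
  have r16 : Real.cos (16 * Real.pi / 13) = Real.cos (10 * Real.pi / 13) := by
    rw [show (16:ℝ) * Real.pi / 13 = Real.pi - (-(3 * Real.pi / 13)) by ring,
      Real.cos_pi_sub, show (10:ℝ) * Real.pi / 13 = Real.pi - 3 * Real.pi / 13 by ring,
      Real.cos_pi_sub, Real.cos_neg]
  -- product-to-sum facts for cosines
  have sq2 : Real.cos (2 * Real.pi / 13) * Real.cos (2 * Real.pi / 13) = (Real.cos (4 * Real.pi / 13) + 1) / 2 := by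
    have h := mulcos (2 * Real.pi / 13) (2 * Real.pi / 13)
    rw [show 2 * Real.pi / 13 + 2 * Real.pi / 13 = 4 * Real.pi / 13 by ring,
      show 2 * Real.pi / 13 - 2 * Real.pi / 13 = 0 by ring, Real.cos_zero] at h
    linarith [h]
  have sq6 : Real.cos (6 * Real.pi / 13) * Real.cos (6 * Real.pi / 13) = (Real.cos (12 * Real.pi / 13) + 1) / 2 := by
    have h := mulcos (6 * Real.pi / 13) (6 * Real.pi / 13)
    rw [show 6 * Real.pi / 13 + 6 * Real.pi / 13 = 12 * Real.pi / 13 by ring,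
      show 6 * Real.pi / 13 - 6 * Real.pi / 13 = 0 by ring, Real.cos_zero] at h
    linarith [h]
  have sq8 : Real.cos (8 * Real.pi / 13) * Real.cos (8 * Real.pi / 13) = (Real.cos (10 * Real.pi / 13) + 1) / 2 := by
    have h := mulcos (8 * Real.pi / 13) (8 * Real.pi / 13)
    rw [show 8 * Real.pi / 13 + 8 * Real.pi / 13 = 16 * Real.pi / 13 by ring,
      show 8 * Real.pi / 13 - 8 * Real.pi / 13 = 0 by ring, Real.cos_zero, r16] at h
    linarith [h]
  have f26 : Real.cos (6 * Real.pi / 13) * Real.cos (2 * Real.pi / 13) = (Real.cos (8 * Real.pi / 13) + Real.cos (4 * Real.pi / 13)) / 2 := by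
    have h := mulcos (6 * Real.pi / 13) (2 * Real.pi / 13)
    rw [show 6 * Real.pi / 13 + 2 * Real.pi / 13 = 8 * Real.pi / 13 by ring,
      show 6 * Real.pi / 13 - 2 * Real.pi / 13 = 4 * Real.pi / 13 by ring] at h
    linarith [h]
  have f28 : Real.cos (8 * Real.pi / 13) * Real.cos (2 * Real.pi / 13) = (Real.cos (10 * Real.pi / 13) + Real.cos (6 * Real.pi / 13)) / 2 := by
    have h := mulcos (8 * Real.pi / 13) (2 * Real.pi / 13)
    rw [show 8 * Real.pi / 13 + 2 * Real.pi / 13 = 10 * Real.pi / 13 by ring,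
      show 8 * Real.pi / 13 - 2 * Real.pi / 13 = 6 * Real.pi / 13 by ring] at h
    linarith [h]
  have f68 : Real.cos (8 * Real.pi / 13) * Real.cos (6 * Real.pi / 13) = (Real.cos (12 * Real.pi / 13) + Real.cos (2 * Real.pi / 13)) / 2 := by
    have h := mulcos (8 * Real.pi / 13) (6 * Real.pi / 13)
    rw [show 8 * Real.pi / 13 + 6 * Real.pi / 13 = 14 * Real.pi / 13 by ring,
      show 8 * Real.pi / 13 - 6 * Real.pi / 13 = 2 * Real.pi / 13 by ring, r14] at h
    linarith [h]
  -- Gauss sum: sqrt 13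
  have hAsq : (1 + 4 * Real.cos (2 * Real.pi / 13) + 4 * Real.cos (6 * Real.pi / 13) + 4 * Real.cos (8 * Real.pi / 13)) ^ 2 = 13 := by
    linear_combination 16 * sq2 + 16 * sq6 + 16 * sq8 + 32 * f26 + 32 * f28 + 32 * f68 + 24 * hSS
  have hApos : 0 ≤ 1 + 4 * Real.cos (2 * Real.pi / 13) + 4 * Real.cos (6 * Real.pi / 13) + 4 * Real.cos (8 * Real.pi / 13) := by
    have h25 : Real.cos (5 * Real.pi / 13) < Real.cos (2 * Real.pi / 13) := by
      apply Real.cos_lt_cos_of_nonneg_of_le_pi (by positivity) (by linarith) (by linarith)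
    have h6 : 0 < Real.cos (6 * Real.pi / 13) := by
      apply Real.cos_pos_of_mem_Ioo
      constructor <;> linarith
    linarith [r8]
  have hA : Real.sqrt 13 = 1 + 4 * Real.cos (2 * Real.pi / 13) + 4 * Real.cos (6 * Real.pi / 13) + 4 * Real.cos (8 * Real.pi / 13) := by
    conv_lhs => rw [← hAsq]
    exact Real.sqrt_sq hApos
  -- sine product facts
  have ss2 : Real.sin (2 * Real.pi / 13) * Real.sin (2 * Real.pi / 13) = (1 - Real.cos (4 * Real.pi / 13)) / 2 := by
    have h := mulsin (2 * Real.pi / 13) (2 * Real.pi / 13)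
    rw [show 2 * Real.pi / 13 + 2 * Real.pi / 13 = 4 * Real.pi / 13 by ring,
      show 2 * Real.pi / 13 - 2 * Real.pi / 13 = 0 by ring, Real.cos_zero] at h
    linarith [h]
  have ss5 : Real.sin (5 * Real.pi / 13) * Real.sin (5 * Real.pi / 13) = (1 - Real.cos (10 * Real.pi / 13)) / 2 := by
    have h := mulsin (5 * Real.pi / 13) (5 * Real.pi / 13)
    rw [show 5 * Real.pi / 13 + 5 * Real.pi / 13 = 10 * Real.pi / 13 by ring,
      show 5 * Real.pi / 13 - 5 * Real.pi / 13 = 0 by ring, Real.cos_zero] at h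
    linarith [h]
  have ss6 : Real.sin (6 * Real.pi / 13) * Real.sin (6 * Real.pi / 13) = (1 - Real.cos (12 * Real.pi / 13)) / 2 := by
    have h := mulsin (6 * Real.pi / 13) (6 * Real.pi / 13)
    rw [show 6 * Real.pi / 13 + 6 * Real.pi / 13 = 12 * Real.pi / 13 by ring,
      show 6 * Real.pi / 13 - 6 * Real.pi / 13 = 0 by ring, Real.cos_zero] at h
    linarith [h]
  have g25 : Real.sin (5 * Real.pi / 13) * Real.sin (2 * Real.pi / 13) = (Real.cos (3 * Real.pi / 13) - (-Real.cos (6 * Real.pi / 13))) / 2 := by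
    have h := mulsin (5 * Real.pi / 13) (2 * Real.pi / 13)
    rw [show 5 * Real.pi / 13 + 2 * Real.pi / 13 = 7 * Real.pi / 13 by ring,
      show 5 * Real.pi / 13 - 2 * Real.pi / 13 = 3 * Real.pi / 13 by ring, r7] at h
    linarith [h]
  have g26 : Real.sin (6 * Real.pi / 13) * Real.sin (2 * Real.pi / 13) = (Real.cos (4 * Real.pi / 13) - Real.cos (8 * Real.pi / 13)) / 2 := by
    have h := mulsin (6 * Real.pi / 13) (2 * Real.pi / 13)
    rw [show 6 * Real.pi / 13 + 2 * Real.pi / 13 = 8 * Real.pi / 13 by ring,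
      show 6 * Real.pi / 13 - 2 * Real.pi / 13 = 4 * Real.pi / 13 by ring] at h
    linarith [h]
  have g56 : Real.sin (6 * Real.pi / 13) * Real.sin (5 * Real.pi / 13) = (Real.cos (1 * Real.pi / 13) - (-Real.cos (2 * Real.pi / 13))) / 2 := by
    have h := mulsin (6 * Real.pi / 13) (5 * Real.pi / 13)
    rw [show 6 * Real.pi / 13 + 5 * Real.pi / 13 = 11 * Real.pi / 13 by ring,
      show 6 * Real.pi / 13 - 5 * Real.pi / 13 = 1 * Real.pi / 13 by ring, r11] at h
    linarith [h]
  -- sqrt (26 - 6 sqrt 13)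
  have hBsq : (4 * Real.sin (2 * Real.pi / 13) - 4 * Real.sin (5 * Real.pi / 13) + 4 * Real.sin (6 * Real.pi / 13)) ^ 2 = 26 - 6 * Real.sqrt 13 := by
    rw [hA]
    linear_combination 16 * ss2 + 16 * ss5 + 16 * ss6 - 32 * g25 + 32 * g26 - 32 * g56 +
      8 * hSS + (-16) * r10 + (-16) * r12
  have hBpos : 0 ≤ 4 * Real.sin (2 * Real.pi / 13) - 4 * Real.sin (5 * Real.pi / 13) + 4 * Real.sin (6 * Real.pi / 13) := by
    have h2 : 0 < Real.sin (2 * Real.pi / 13) := by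
      exact Real.sin_pos_of_pos_of_lt_pi (by positivity) (by linarith)
    have h56 : 0 ≤ Real.sin (6 * Real.pi / 13) - Real.sin (5 * Real.pi / 13) := by
      rw [Real.sin_sub_sin]
      have h1 : 0 < Real.sin ((6 * Real.pi / 13 - 5 * Real.pi / 13) / 2) := by
        apply Real.sin_pos_of_pos_of_lt_pi (by linarith) (by linarith)
      have h2 : 0 < Real.cos ((6 * Real.pi / 13 + 5 * Real.pi / 13) / 2) := by
        apply Real.cos_pos_of_mem_Ioo
        constructor <;> linarith
      positivity
    linarith
  have hB : Real.sqrt (26 - 6 * Real.sqrt 13) = 4 * Real.sin (2 * Real.pi / 13) - 4 * Real.sin (5 * Real.pi / 13) + 4 * Real.sin (6 * Real.pi / 13) := by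
    rw [← hBsq, Real.sqrt_sq hBpos]
  -- product with cos (pi/26)
  have p2 : Real.sin (2 * Real.pi / 13) * Real.cos (Real.pi / 26) = (Real.cos (4 * Real.pi / 13) + Real.cos (5 * Real.pi / 13)) / 2 := by
    have h := sincos (2 * Real.pi / 13) (Real.pi / 26)
    rw [show 2 * Real.pi / 13 + Real.pi / 26 = Real.pi / 2 - 4 * Real.pi / 13 by ring,
      show 2 * Real.pi / 13 - Real.pi / 26 = Real.pi / 2 - 5 * Real.pi / 13 by ring,
      Real.sin_pi_div_two_sub, Real.sin_pi_div_two_sub] at h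
    linarith [h]
  have p5 : Real.sin (5 * Real.pi / 13) * Real.cos (Real.pi / 26) = (Real.cos (1 * Real.pi / 13) + Real.cos (2 * Real.pi / 13)) / 2 := by
    have h := sincos (5 * Real.pi / 13) (Real.pi / 26)
    rw [show 5 * Real.pi / 13 + Real.pi / 26 = Real.pi / 2 - 1 * Real.pi / 13 by ring,
      show 5 * Real.pi / 13 - Real.pi / 26 = Real.pi / 2 - 2 * Real.pi / 13 by ring,
      Real.sin_pi_div_two_sub, Real.sin_pi_div_two_sub] at h
    linarith [h]
  have p6 : Real.sin (6 * Real.pi / 13) * Real.cos (Real.pi / 26) = (1 + Real.cos (1 * Real.pi / 13)) / 2 := by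
    have h := sincos (6 * Real.pi / 13) (Real.pi / 26)
    rw [show 6 * Real.pi / 13 + Real.pi / 26 = Real.pi / 2 by ring,
      show 6 * Real.pi / 13 - Real.pi / 26 = Real.pi / 2 - 1 * Real.pi / 13 by ring,
      Real.sin_pi_div_two, Real.sin_pi_div_two_sub] at h
    linarith [h]
  rw [hB, hA]
  linear_combination 8 * p2 - 8 * p5 + 8 * p6 + 4 * r8
end
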